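/- Let Y be a symmetric positive definite g×g real matrix with associated norm ‖·‖_Y, and let ψ(x) = min_{m ∈ ℤ^g} ‖x - m‖_Y. For any y ∈ ℝ^g whose supremum μ(Y) of ψ is attained at y, and for every x ∈ ℝ^g, one has 2ψ(x)² + 2ψ(x - y)² ≥ μ(Y)² + ψ(2x - y)². -/

import Mathlib

/-! For lattice points `m`, `n` put `a = x - m` and `b = x - y - n`. Then `a - b = y - (m - n)` and
`a + b = (2x - y) - (m + n)` are translates of `y` and `2x - y` by lattice vectors, so
`‖a - b‖_Y ≥ ψ(y) = μ(Y)` and `‖a + b‖_Y ≥ ψ(2x - y)`, and the parallelogram law gives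
`μ(Y)² + ψ(2x - y)² ≤ 2‖a‖_Y² + 2‖b‖_Y²`. Minimizing over `m` and then over `n` finishes the proof. -/

open MeasureTheory Real Matrix

noncomputable def coeZ {g : ℕ} (m : Fin g → ℤ) : Fin g → ℝ := fun i => (m i : ℝ)

noncomputable def normY {g : ℕ} (Y : Matrix (Fin g) (Fin g) ℝ) (x : Fin g → ℝ) : ℝ :=
  Real.sqrt (x ⬝ᵥ Y.mulVec x)

noncomputable def psi {g : ℕ} (Y : Matrix (Fin g) (Fin g) ℝ) (x : Fin g → ℝ) : ℝ :=
  ⨅ m : Fin g → ℤ, normY Y (x - coeZ m)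

noncomputable def mu {g : ℕ} (Y : Matrix (Fin g) (Fin g) ℝ) : ℝ :=
  ⨆ x : Fin g → ℝ, psi Y x

noncomputable def lam1 {g : ℕ} (Y : Matrix (Fin g) (Fin g) ℝ) : ℝ :=
  ⨅ m : {m : Fin g → ℤ // m ≠ 0}, normY Y (coeZ (m : Fin g → ℤ))

theorem le_ciInf_sq {ι : Sort*} [Nonempty ι] {f : ι → ℝ} (hf : ∀ i, 0 ≤ f i) {a : ℝ}
    (h : ∀ i, a ≤ f i ^ 2) : a ≤ (⨅ i, f i) ^ 2 :=
  (Real.sqrt_le_left (le_ciInf hf)).mp <| le_ciInf fun i => (Real.sqrt_le_left (hf i)).mpr (h i)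

section

variable {g : ℕ} {Y : Matrix (Fin g) (Fin g) ℝ}

theorem coeZ_add (m n : Fin g → ℤ) : coeZ (m + n) = coeZ m + coeZ n := by
  ext i
  simp [coeZ]

theorem coeZ_sub (m n : Fin g → ℤ) : coeZ (m - n) = coeZ m - coeZ n := by
  ext i
  simp [coeZ]

theorem normY_nonneg (x : Fin g → ℝ) : 0 ≤ normY Y x :=
  Real.sqrt_nonneg _

theorem normY_sq (hY : Y.PosSemidef) (x : Fin g → ℝ) : normY Y x ^ 2 = x ⬝ᵥ Y *ᵥ x :=
  Real.sq_sqrt (by simpa using hY.dotProduct_mulVec_nonneg x)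

theorem normY_add_sq_add_normY_sub_sq (hY : Y.PosSemidef) (a b : Fin g → ℝ) :
    normY Y (a + b) ^ 2 + normY Y (a - b) ^ 2 = 2 * normY Y a ^ 2 + 2 * normY Y b ^ 2 := by
  simp only [normY_sq hY, mulVec_add, mulVec_sub, dotProduct_add, dotProduct_sub,
    add_dotProduct, sub_dotProduct]
  ring

theorem psi_nonneg (x : Fin g → ℝ) : 0 ≤ psi Y x :=
  le_ciInf fun _ => normY_nonneg _

theorem psi_le_normY_sub (x : Fin g → ℝ) (m : Fin g → ℤ) : psi Y x ≤ normY Y (x - coeZ m) :=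
  ciInf_le ⟨0, by rintro _ ⟨m, rfl⟩; exact normY_nonneg _⟩ m

theorem le_psi_sq {x : Fin g → ℝ} {a : ℝ} (h : ∀ m, a ≤ normY Y (x - coeZ m) ^ 2) :
    a ≤ psi Y x ^ 2 :=
  le_ciInf_sq (fun _ => normY_nonneg _) h

theorem mu_sq_add_psi_sq_le (hY : Y.PosSemidef) {y : Fin g → ℝ} (hy : psi Y y = mu Y)
    (x : Fin g → ℝ) (m n : Fin g → ℤ) :
    mu Y ^ 2 + psi Y (2 • x - y) ^ 2 ≤
      2 * normY Y (x - coeZ m) ^ 2 + 2 * normY Y (x - y - coeZ n) ^ 2 := by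
  have hsub : y - coeZ (m - n) = (x - coeZ m) - (x - y - coeZ n) := by
    rw [coeZ_sub]
    abel
  have hadd : 2 • x - y - coeZ (m + n) = (x - coeZ m) + (x - y - coeZ n) := by
    rw [coeZ_add, two_smul]
    abel
  have hmu : mu Y ≤ normY Y ((x - coeZ m) - (x - y - coeZ n)) :=
    hy ▸ hsub ▸ psi_le_normY_sub y (m - n)
  have hpsi : psi Y (2 • x - y) ≤ normY Y ((x - coeZ m) + (x - y - coeZ n)) :=
    hadd ▸ psi_le_normY_sub (2 • x - y) (m + n)
  rw [← normY_add_sq_add_normY_sub_sq hY, add_comm]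
  gcongr
  · exact psi_nonneg _
  · exact hy ▸ psi_nonneg y

end

theorem psi_parallelogram_general {g : ℕ} (Y : Matrix (Fin g) (Fin g) ℝ)
    (hY : Y.PosDef) (y : Fin g → ℝ) (hy : psi Y y = mu Y)
    (x : Fin g → ℝ) :
    mu Y ^ 2 + psi Y (2 • x - y) ^ 2 ≤ 2 * psi Y x ^ 2 + 2 * psi Y (x - y) ^ 2 := by
  have hmn := mu_sq_add_psi_sq_le hY.posSemidef hy x
  have hn : ∀ n, (mu Y ^ 2 + psi Y (2 • x - y) ^ 2 - 2 * psi Y x ^ 2) / 2 ≤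
      normY Y (x - y - coeZ n) ^ 2 := fun n => by
    have hm : ∀ m, (mu Y ^ 2 + psi Y (2 • x - y) ^ 2 - 2 * normY Y (x - y - coeZ n) ^ 2) / 2 ≤
        normY Y (x - coeZ m) ^ 2 := fun m => by linarith [hmn m n]
    linarith [le_psi_sq hm]
  linarith [le_psi_sq hn]

theorem psi_parallelogram {g : ℕ} (Y : Matrix (Fin g) (Fin g) ℝ)
    (hsymm : Y.IsSymm) (hY : Y.PosDef) (y : Fin g → ℝ) (hy : psi Y y = mu Y)
    (x : Fin g → ℝ) :
    mu Y ^ 2 + psi Y (2 • x - y) ^ 2 ≤ 2 * psi Y x ^ 2 + 2 * psi Y (x - y) ^ 2 :=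
  psi_parallelogram_general Y hY y hy x
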